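/- For every subset S of Baire space, the set S \ [S_∞] is guessable. -/

import Mathlib

open Ordinal Filter Topology

/-- The first `n` values of `f` as a finite sequence. -/
def seg (f : ℕ → ℕ) (n : ℕ) : List ℕ := (List.range n).map f

/-- `[X]`: the set of infinite sequences all of whose initial segments lie in `X`. -/
def ext (X : Set (List ℕ)) : Set (ℕ → ℕ) := {f | ∀ n, seg f n ∈ X}

/-- `σ` is an initial segment of `f`. -/
def isInit (σ : List ℕ) (f : ℕ → ℕ) : Prop := seg f σ.length = σ

/-- One step of the derivative process relative to `S`. -/
def derivStep (S : Set (ℕ → ℕ)) (X : Set (List ℕ)) : Set (List ℕ) :=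
  {x ∈ X | ∃ f g : ℕ → ℕ, f ∈ ext X ∧ g ∈ ext X ∧ isInit x f ∧ isInit x g ∧ f ∈ S ∧ g ∉ S}

/-- The transfinite sequence `S_α`. -/
noncomputable def dSeq (S : Set (ℕ → ℕ)) (α : Ordinal.{0}) : Set (List ℕ) :=
  Ordinal.limitRecOn α Set.univ (fun _ X => derivStep S X)
    (fun o _ ih => ⋂ (β : Set.Iio o), ih β.1 β.2)

/-- `α(S)`: the least ordinal where the process stabilizes. -/
noncomputable def kernelOrd (S : Set (ℕ → ℕ)) : Ordinal.{0} :=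
  sInf {α | dSeq S α = dSeq S (α + 1)}

/-- `S_∞`, the kernel. -/
noncomputable def kernel (S : Set (ℕ → ℕ)) : Set (List ℕ) := dSeq S (kernelOrd S)

/-- `β(σ)`: the least ordinal `α` with `σ ∉ S_α`. -/
noncomputable def bOrd (S : Set (ℕ → ℕ)) (σ : List ℕ) : Ordinal.{0} :=
  sInf {α | σ ∉ dSeq S α}

open Classical in
/-- `S` is guessable. -/
def Guessable (S : Set (ℕ → ℕ)) : Prop :=
  ∃ G : List ℕ → ℕ, ∀ f : ℕ → ℕ,
    Tendsto (fun n => G (seg f n)) atTop (𝓝 (if f ∈ S then 1 else 0))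

/-- `Δ⁰₂`: both a countable union of closed sets and a countable intersection of open sets. -/
def IsDelta02 (S : Set (ℕ → ℕ)) : Prop :=
  (∃ F : ℕ → Set (ℕ → ℕ), (∀ n, IsClosed (F n)) ∧ S = ⋃ n, F n) ∧
  (∃ U : ℕ → Set (ℕ → ℕ), (∀ n, IsOpen (U n)) ∧ S = ⋂ n, U n)

/-!
A sequence `σ` outside `S_α` leaves the derivative process at a successor stage: with
`γ + 1 = β(σ)` we have `σ ∈ S_γ \ S_{γ+1}`, so all branches of `[S_γ]` through `σ` agree on
membership in `S`. Guess `0` on `S_α`, and otherwise whether some branch of `[S_γ]` through `σ`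
lies in `S`. Along `f ∉ [S_α]` the ordinals `β(f↾n)` decrease, hence are eventually equal to some
`γ + 1`; then `f ∈ [S_γ]`, so the guess is eventually the truth value of `f ∈ S`.
-/

lemma seg_length (f : ℕ → ℕ) (n : ℕ) : (seg f n).length = n := by
  simp [seg]

lemma seg_take (f : ℕ → ℕ) {m n : ℕ} (h : m ≤ n) : (seg f n).take m = seg f m := by
  simp [seg, ← List.map_take, List.take_range, Nat.min_eq_left h]

lemma isInit_seg_iff {f g : ℕ → ℕ} {n : ℕ} : isInit (seg f n) g ↔ seg g n = seg f n := by
  simp [isInit, seg_length]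

lemma isInit_seg (f : ℕ → ℕ) (n : ℕ) : isInit (seg f n) f :=
  isInit_seg_iff.2 rfl

lemma seg_eq_of_isInit_seg {f g : ℕ → ℕ} {m n : ℕ} (hmn : m ≤ n) (h : isInit (seg f n) g) :
    seg g m = seg f m := by
  rw [← seg_take g hmn, isInit_seg_iff.1 h, seg_take f hmn]

lemma isInit_seg_of_le {f g : ℕ → ℕ} {m n : ℕ} (hmn : m ≤ n) (h : isInit (seg f n) g) :
    isInit (seg f m) g :=
  isInit_seg_iff.2 (seg_eq_of_isInit_seg hmn h)

lemma seg_mem_of_isInit {X : Set (List ℕ)} {σ : List ℕ} {f : ℕ → ℕ} (hf : f ∈ ext X)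
    (h : isInit σ f) : σ ∈ X :=
  h ▸ hf _

section DerivStep

variable {S : Set (ℕ → ℕ)} {X : Set (List ℕ)}

lemma seg_mem_derivStep_of_le {f : ℕ → ℕ} {m n : ℕ} (hmn : m ≤ n)
    (h : seg f n ∈ derivStep S X) : seg f m ∈ derivStep S X := by
  obtain ⟨-, g, g', hg, hg', hfg, hfg', hgS, hg'S⟩ := h
  refine ⟨?_, g, g', hg, hg', isInit_seg_of_le hmn hfg, isInit_seg_of_le hmn hfg', hgS, hg'S⟩
  exact seg_eq_of_isInit_seg hmn hfg ▸ hg m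

lemma exists_mem_iff_of_notMem_derivStep {σ : List ℕ} {f : ℕ → ℕ}
    (hσ : σ ∉ derivStep S X) (hf : f ∈ ext X) (hσf : isInit σ f) :
    (∃ g ∈ ext X, isInit σ g ∧ g ∈ S) ↔ f ∈ S := by
  refine ⟨fun ⟨g, hg, hσg, hgS⟩ => ?_, fun hfS => ⟨f, hf, hσf, hfS⟩⟩
  by_contra hfS
  exact hσ ⟨seg_mem_of_isInit hf hσf, g, f, hg, hf, hσg, hσf, hgS, hfS⟩

end DerivStep

section DSeq

variable (S : Set (ℕ → ℕ))

lemma dSeq_zero : dSeq S 0 = Set.univ := by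
  rw [dSeq, Ordinal.limitRecOn_zero]

lemma dSeq_add_one (α : Ordinal.{0}) : dSeq S (α + 1) = derivStep S (dSeq S α) := by
  rw [dSeq, Ordinal.limitRecOn_add_one]
  rfl

lemma dSeq_of_isSuccLimit {o : Ordinal.{0}} (h : Order.IsSuccLimit o) :
    dSeq S o = ⋂ β : Set.Iio o, dSeq S β := by
  rw [dSeq, Ordinal.limitRecOn_limit _ _ _ _ h]
  rfl

lemma mem_dSeq_of_isSuccPrelimit {o : Ordinal.{0}} (ho : Order.IsSuccPrelimit o) {σ : List ℕ}
    (h : ∀ β < o, σ ∈ dSeq S β) : σ ∈ dSeq S o := by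
  by_cases hmin : IsMin o
  · rw [hmin.eq_bot, Ordinal.bot_eq_zero, dSeq_zero]
    trivial
  · rw [dSeq_of_isSuccLimit S (.mk hmin ho)]
    exact Set.mem_iInter.2 fun β => h β β.2

lemma seg_mem_dSeq_of_le (α : Ordinal.{0}) {f : ℕ → ℕ} {m n : ℕ} (hmn : m ≤ n)
    (h : seg f n ∈ dSeq S α) : seg f m ∈ dSeq S α := by
  induction α using Ordinal.limitRecOn with
  | zero => simp [dSeq_zero]
  | add_one α _ =>
    rw [dSeq_add_one] at h ⊢
    exact seg_mem_derivStep_of_le hmn h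
  | limit o ho ih =>
    rw [dSeq_of_isSuccLimit S ho, Set.mem_iInter] at h ⊢
    exact fun β => ih β β.2 (h β)

end DSeq

section BOrd

variable {S : Set (ℕ → ℕ)} {α : Ordinal.{0}} {σ : List ℕ}

lemma notMem_dSeq_bOrd (h : σ ∉ dSeq S α) : σ ∉ dSeq S (bOrd S σ) :=
  csInf_mem (s := {α | σ ∉ dSeq S α}) ⟨α, h⟩

lemma mem_dSeq_of_lt_bOrd {γ : Ordinal.{0}} (h : γ < bOrd S σ) : σ ∈ dSeq S γ :=
  not_not.1 (notMem_of_lt_csInf' h)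

lemma succ_pred_bOrd (h : σ ∉ dSeq S α) : Order.succ (Ordinal.pred (bOrd S σ)) = bOrd S σ :=
  Ordinal.succ_pred_eq_iff_not_isSuccPrelimit.2 fun hlim =>
    notMem_dSeq_bOrd h (mem_dSeq_of_isSuccPrelimit S hlim fun _ => mem_dSeq_of_lt_bOrd)

lemma pred_bOrd_lt (h : σ ∉ dSeq S α) : Ordinal.pred (bOrd S σ) < bOrd S σ := by
  simpa only [succ_pred_bOrd h] using Order.lt_succ (Ordinal.pred (bOrd S σ))

lemma notMem_derivStep_dSeq_pred_bOrd (h : σ ∉ dSeq S α) :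
    σ ∉ derivStep S (dSeq S (Ordinal.pred (bOrd S σ))) := by
  rw [← dSeq_add_one, ← Order.succ_eq_add_one, succ_pred_bOrd h]
  exact notMem_dSeq_bOrd h

lemma bOrd_seg_le_of_le {f : ℕ → ℕ} {m n : ℕ} (hmn : m ≤ n) (h : seg f m ∉ dSeq S α) :
    bOrd S (seg f n) ≤ bOrd S (seg f m) :=
  csInf_le_csInf (OrderBot.bddBelow _) ⟨α, h⟩ fun _ hβ hn => hβ (seg_mem_dSeq_of_le S _ hmn hn)

lemma exists_bOrd_seg_eventually_eq {f : ℕ → ℕ} {n₀ : ℕ} (h : seg f n₀ ∉ dSeq S α) :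
    ∃ N ≥ n₀, ∀ n ≥ N, bOrd S (seg f n) = bOrd S (seg f N) := by
  have hanti : Antitone fun k => bOrd S (seg f (n₀ + k)) := fun i j hij =>
    bOrd_seg_le_of_le (by omega) fun hi => h (seg_mem_dSeq_of_le S α (by omega) hi)
  obtain ⟨k, hk⟩ := WellFoundedLT.antitone_chain_condition hanti
  refine ⟨n₀ + k, by omega, fun n hn => ?_⟩
  have := hk (n - n₀) (by omega)
  rwa [Nat.add_sub_cancel' (by omega), eq_comm] at this

end BOrd

section Guess

open Classical in
noncomputable def guess (S : Set (ℕ → ℕ)) (α : Ordinal.{0}) (σ : List ℕ) : ℕ :=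
  if σ ∉ dSeq S α ∧ ∃ g ∈ ext (dSeq S (Ordinal.pred (bOrd S σ))), isInit σ g ∧ g ∈ S then 1 else 0

variable {S : Set (ℕ → ℕ)} {α : Ordinal.{0}} {f : ℕ → ℕ}

lemma guess_seg_eq_zero (hf : f ∈ ext (dSeq S α)) (n : ℕ) : guess S α (seg f n) = 0 :=
  if_neg fun h => h.1 (hf n)

lemma mem_ext_dSeq_pred_bOrd {N : ℕ} (hN : seg f N ∉ dSeq S α)
    (hconst : ∀ n ≥ N, bOrd S (seg f n) = bOrd S (seg f N)) :
    f ∈ ext (dSeq S (Ordinal.pred (bOrd S (seg f N)))) := fun n =>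
  seg_mem_dSeq_of_le S _ (le_max_left n N) <| mem_dSeq_of_lt_bOrd <| by
    rw [hconst _ (le_max_right n N)]
    exact pred_bOrd_lt hN

open Classical in
lemma eventually_guess_seg_eq (hf : f ∉ ext (dSeq S α)) :
    ∀ᶠ n in atTop, guess S α (seg f n) = if f ∈ S then 1 else 0 := by
  obtain ⟨n₀, hn₀⟩ : ∃ n, seg f n ∉ dSeq S α := by simpa [ext] using hf
  have hout : ∀ n ≥ n₀, seg f n ∉ dSeq S α := fun n hn h => hn₀ (seg_mem_dSeq_of_le S α hn h)
  obtain ⟨N, hNn₀, hconst⟩ := exists_bOrd_seg_eventually_eq hn₀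
  have hfγ := mem_ext_dSeq_pred_bOrd (hout N hNn₀) hconst
  filter_upwards [eventually_ge_atTop N] with n hn
  have hσ := notMem_derivStep_dSeq_pred_bOrd (hout n (by omega))
  rw [hconst n hn] at hσ
  rw [guess, hconst n hn, exists_mem_iff_of_notMem_derivStep hσ hfγ (isInit_seg f n)]
  simp only [hout n (by omega), not_false_eq_true, true_and]

end Guess

open Classical in
theorem guessable_diff_ext_dSeq (S : Set (ℕ → ℕ)) (α : Ordinal.{0}) :
    Guessable (S \ ext (dSeq S α)) := by
  refine ⟨guess S α, fun f => ?_⟩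
  by_cases hf : f ∈ ext (dSeq S α)
  · simp [hf, guess_seg_eq_zero hf]
  · simpa [hf] using tendsto_const_nhds.congr' (EventuallyEq.symm (eventually_guess_seg_eq hf))

theorem stmt10 (S : Set (ℕ → ℕ)) : Guessable (S \ ext (kernel S)) :=
  guessable_diff_ext_dSeq S (kernelOrd S)
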